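/- Let n be even and π a permutation of {1,…,n} with π² = id. Then the D-type positive map Φ = Φ_{1,π} with D = (n−1)I_n + P_π is decomposable: its Choi matrix C(Φ) can be written as C_1 + C_2 where C_1 is positive semidefinite and the partial transpose C_2^{T_2} of C_2 is positive semidefinite. -/

import Mathlib

/-!
Write `M = (n - 1) I + P_π - J`. The part of `C(Φ)` supported on the index pairs `(i, i)` is
`∑ M_ij E_ij ⊗ E_ij`, and `M` is the Laplacian of the complete graph with the matching
`{i, π i}` removed, hence positive semidefinite. The rest of `C(Φ)` has partial transpose equal
to the Laplacian of the graph on index pairs joining `(i, π i)` to `(π i, i)`, which is positive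
semidefinite for the same reason.
-/

open Matrix ComplexOrder Finset ComplexConjugate

section Laplacian

variable {ι 𝕜 : Type*} [Fintype ι] [DecidableEq ι] [RCLike 𝕜]

def weightedLaplacian (w : ι → ι → ℝ) : Matrix ι ι 𝕜 :=
  diagonal (fun i => ∑ j, (w i j : 𝕜)) - of fun i j => (w i j : 𝕜)

lemma weightedLaplacian_apply (w : ι → ι → ℝ) (i j : ι) :
    (weightedLaplacian w : Matrix ι ι 𝕜) i j
      = (if i = j then ((∑ k, w i k : ℝ) : 𝕜) else 0) - w i j := by
  simp [weightedLaplacian, diagonal_apply]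

lemma weightedLaplacian_mulVec (w : ι → ι → ℝ) (x : ι → 𝕜) (i : ι) :
    (weightedLaplacian w *ᵥ x) i = ∑ j, (w i j : 𝕜) * (x i - x j) := by
  simp only [weightedLaplacian, sub_mulVec, Pi.sub_apply, mulVec_diagonal, Finset.sum_mul,
    mul_sub, Finset.sum_sub_distrib]
  rfl

lemma star_dotProduct_weightedLaplacian_mulVec {w : ι → ι → ℝ} (hw : ∀ i j, w i j = w j i)
    (x : ι → 𝕜) :
    star x ⬝ᵥ weightedLaplacian w *ᵥ x
      = (((∑ i, ∑ j, w i j * ‖x i - x j‖ ^ 2) / 2 : ℝ) : 𝕜) := by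
  have hform : star x ⬝ᵥ weightedLaplacian w *ᵥ x
      = ∑ i, ∑ j, (w i j : 𝕜) * (conj (x i) * (x i - x j)) := by
    simp only [dotProduct, weightedLaplacian_mulVec, Finset.mul_sum, Pi.star_apply,
      RCLike.star_def]
    exact Finset.sum_congr rfl fun i _ => Finset.sum_congr rfl fun j _ => by ring
  have hform_swap : star x ⬝ᵥ weightedLaplacian w *ᵥ x
      = ∑ i, ∑ j, (w i j : 𝕜) * (conj (x j) * (x j - x i)) := by
    rw [hform, Finset.sum_comm]
    simp only [hw]
  have htwice : (2 : 𝕜) * (star x ⬝ᵥ weightedLaplacian w *ᵥ x)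
      = ∑ i, ∑ j, (w i j : 𝕜) * (conj (x i - x j) * (x i - x j)) := by
    rw [two_mul]
    nth_rewrite 1 [hform]
    rw [hform_swap, ← Finset.sum_add_distrib]
    refine Finset.sum_congr rfl fun i _ => ?_
    rw [← Finset.sum_add_distrib]
    refine Finset.sum_congr rfl fun j _ => ?_
    rw [map_sub]
    ring
  simp only [RCLike.conj_mul] at htwice
  push_cast
  linear_combination htwice / 2

lemma posSemidef_weightedLaplacian {w : ι → ι → ℝ} (hw : ∀ i j, w i j = w j i)
    (hw₀ : ∀ i j, 0 ≤ w i j) : (weightedLaplacian w : Matrix ι ι 𝕜).PosSemidef := by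
  refine .of_dotProduct_mulVec_nonneg ?_ fun x => ?_
  · ext i j
    by_cases h : i = j
    · subst h
      simp [weightedLaplacian]
    · simp [weightedLaplacian, h, Ne.symm h, hw i j]
  · rw [star_dotProduct_weightedLaplacian_mulVec hw, RCLike.ofReal_nonneg]
    exact div_nonneg (sum_nonneg fun i _ => sum_nonneg fun j _ =>
      mul_nonneg (hw₀ i j) (sq_nonneg _)) zero_le_two

end Laplacian

section Choi

variable {ι : Type*} [Fintype ι] [DecidableEq ι]

def diagEmbed {R : Type*} [Zero R] (M : Matrix ι ι R) : Matrix (ι × ι) (ι × ι) R :=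
  of fun p q => if p.1 = p.2 ∧ q.1 = q.2 then M p.1 q.1 else 0

lemma Matrix.PosSemidef.diagEmbed {𝕜 : Type*} [RCLike 𝕜] {M : Matrix ι ι 𝕜}
    (hM : M.PosSemidef) : (diagEmbed M).PosSemidef := by
  let B : Matrix ι (ι × ι) 𝕜 := of fun i p => if p.1 = p.2 ∧ p.1 = i then 1 else 0
  convert hM.conjTranspose_mul_mul_same B
  ext ⟨i, k⟩ ⟨j, l⟩
  simp only [B, _root_.diagEmbed, ite_and, of_apply, mul_apply, conjTranspose_apply,
    RCLike.star_def, apply_ite (starRingEnd 𝕜), map_one, map_zero, ite_mul, one_mul, zero_mul,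
    sum_ite_irrel, sum_ite_eq, mem_univ, ↓reduceIte, sum_const_zero, mul_ite, mul_one, mul_zero]
  split_ifs <;> rfl

/-- The index `(i, k)` stands for row `i` of the first tensor factor and row `k` of the second,
so that `choiMatrix Φ = ∑ E_ij ⊗ Φ(E_ij)`. -/
def choiMatrix {R : Type*} [Zero R] [One R] (Φ : Matrix ι ι R → Matrix ι ι R) :
    Matrix (ι × ι) (ι × ι) R :=
  of fun p q => Φ (single p.1 q.1 1) p.2 q.2

def partialTranspose {R : Type*} (C : Matrix (ι × ι) (ι × ι) R) : Matrix (ι × ι) (ι × ι) R :=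
  of fun p q => C (p.1, q.2) (q.1, p.2)

/-- Its Laplacian is `(card ι - 1) I + P_π - J`. -/
def permComplementWeight (π : Equiv.Perm ι) (i j : ι) : ℝ := if j = π i then 0 else 1

def swapPairWeight (π : Equiv.Perm ι) (p q : ι × ι) : ℝ :=
  if p.2 = π p.1 ∧ q = p.swap then 1 else 0

omit [Fintype ι] in
lemma permComplementWeight_symm {π : Equiv.Perm ι} (hπ : Function.Involutive π) (i j : ι) :
    permComplementWeight π i j = permComplementWeight π j i := by
  simp only [permComplementWeight, eq_comm (a := j), hπ.eq_iff]

omit [Fintype ι] in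
lemma swapPairWeight_symm {π : Equiv.Perm ι} (hπ : Function.Involutive π) (p q : ι × ι) :
    swapPairWeight π p q = swapPairWeight π q p := by
  obtain ⟨i, k⟩ := p
  obtain ⟨j, l⟩ := q
  simp only [swapPairWeight, Prod.swap_prod_mk, Prod.mk.injEq]
  grind [Function.Involutive]

omit [Fintype ι] in
lemma permComplementWeight_nonneg (π : Equiv.Perm ι) (i j : ι) :
    0 ≤ permComplementWeight π i j := by
  unfold permComplementWeight
  split_ifs <;> norm_num

omit [Fintype ι] in
lemma swapPairWeight_nonneg (π : Equiv.Perm ι) (p q : ι × ι) : 0 ≤ swapPairWeight π p q := by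
  unfold swapPairWeight
  split_ifs <;> norm_num

lemma sum_permComplementWeight (π : Equiv.Perm ι) (i : ι) :
    ∑ j, permComplementWeight π i j = Fintype.card ι - 1 := by
  simp [permComplementWeight, Finset.sum_ite, Finset.filter_ne',
    Nat.cast_pred (Fintype.card_pos_iff.2 ⟨i⟩)]

lemma sum_swapPairWeight (π : Equiv.Perm ι) (p : ι × ι) :
    ∑ q, swapPairWeight π p q = if p.2 = π p.1 then 1 else 0 := by
  simp [swapPairWeight, ite_and]

end Choi

section DType

variable {n : ℕ}

def dTypeMap (π : Equiv.Perm (Fin n)) (A : Matrix (Fin n) (Fin n) ℂ) :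
    Matrix (Fin n) (Fin n) ℂ :=
  diagonal (fun j => ∑ i, (((if i = j then (n : ℝ) - 1 else 0) +
    (if i = π j then 1 else 0) : ℝ) : ℂ) * A i i) - A

lemma choiMatrix_dTypeMap_apply (π : Equiv.Perm (Fin n)) (i k j l : Fin n) :
    choiMatrix (dTypeMap π) (i, k) (j, l) = (if i = j ∧ k = l then
      (if i = k then (n : ℂ) - 1 else 0) + (if i = π k then 1 else 0) else 0)
      - if i = k ∧ j = l then 1 else 0 := by
  by_cases hij : i = j
  · subst hij
    simp [choiMatrix, dTypeMap, diagonal_apply, single_apply, ite_and,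
      apply_ite ((↑) : ℝ → ℂ)]
  · simp [choiMatrix, dTypeMap, diagonal_apply, single_apply, ite_and, hij, Ne.symm hij]

lemma partialTranspose_choiMatrix_dTypeMap_sub {π : Equiv.Perm (Fin n)}
    (hπ : Function.Involutive π) :
    partialTranspose (choiMatrix (dTypeMap π)
        - diagEmbed (weightedLaplacian (permComplementWeight π)))
      = weightedLaplacian (swapPairWeight π) := by
  ext ⟨i, k⟩ ⟨j, l⟩
  simp only [partialTranspose, of_apply, Matrix.sub_apply, choiMatrix_dTypeMap_apply, diagEmbed,
    weightedLaplacian_apply, sum_permComplementWeight, sum_swapPairWeight, Fintype.card_fin]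
  simp only [permComplementWeight, swapPairWeight, Prod.swap_prod_mk, Prod.mk.injEq]
  have hπil := hπ.eq_iff (x := i) (y := l)
  push_cast
  split_ifs <;> grind

end DType

theorem stmt_18_general {n : ℕ} (π : Equiv.Perm (Fin n))
    (hπ : π * π = 1)
    (Φ : Matrix (Fin n) (Fin n) ℂ → Matrix (Fin n) (Fin n) ℂ)
    (hΦ : ∀ A, Φ A = Matrix.diagonal (fun j => ∑ i,
        (((if i = j then (n : ℝ) - 1 else 0) +
          (if i = π j then 1 else 0) : ℝ) : ℂ) * A i i) - A) :
    ∃ C₁ C₂ : Matrix (Fin n × Fin n) (Fin n × Fin n) ℂ,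
      (Matrix.of fun p q : Fin n × Fin n =>
          Φ (Matrix.single p.1 q.1 1) p.2 q.2) = C₁ + C₂ ∧
      C₁.PosSemidef ∧
      (Matrix.of fun p q : Fin n × Fin n =>
          C₂ (p.1, q.2) (q.1, p.2)).PosSemidef := by
  have hinv : Function.Involutive π := fun i => by
    rw [← Equiv.Perm.mul_apply, hπ, Equiv.Perm.one_apply]
  obtain rfl : Φ = dTypeMap π := funext hΦ
  let C₁ := diagEmbed (weightedLaplacian (permComplementWeight π) : Matrix (Fin n) (Fin n) ℂ)
  refine ⟨C₁, choiMatrix (dTypeMap π) - C₁, (add_sub_cancel C₁ _).symm, ?_, ?_⟩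
  · exact (posSemidef_weightedLaplacian (permComplementWeight_symm hinv)
      (permComplementWeight_nonneg π)).diagEmbed
  · change (partialTranspose (choiMatrix (dTypeMap π) - C₁)).PosSemidef
    rw [partialTranspose_choiMatrix_dTypeMap_sub hinv]
    exact posSemidef_weightedLaplacian (swapPairWeight_symm hinv) (swapPairWeight_nonneg π)

open Matrix ComplexOrder in
/-- for even `n` and an involutive permutation `π`, the positive
`D`-type map `Φ_{1,π}` (with `D = (n−1)I + P_π`) is decomposable: its Choi
matrix is `C₁ + C₂` with `C₁ ≥ 0` and `C₂^{T₂} ≥ 0`. -/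
theorem stmt_18 {n : ℕ} (hn : Even n) (π : Equiv.Perm (Fin n))
    (hπ : π * π = 1)
    (Φ : Matrix (Fin n) (Fin n) ℂ → Matrix (Fin n) (Fin n) ℂ)
    (hΦ : ∀ A, Φ A = Matrix.diagonal (fun j => ∑ i,
        (((if i = j then (n : ℝ) - 1 else 0) +
          (if i = π j then 1 else 0) : ℝ) : ℂ) * A i i) - A) :
    ∃ C₁ C₂ : Matrix (Fin n × Fin n) (Fin n × Fin n) ℂ,
      (Matrix.of fun p q : Fin n × Fin n =>
          Φ (Matrix.single p.1 q.1 1) p.2 q.2) = C₁ + C₂ ∧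
      C₁.PosSemidef ∧
      (Matrix.of fun p q : Fin n × Fin n =>
          C₂ (p.1, q.2) (q.1, p.2)).PosSemidef :=
  stmt_18_general π hπ Φ hΦ
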